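/- The contraction functor Cont_Q = Lan_{⌊·⌋_Q} over an interior system Q of a poset P sends the indecomposable projective 𝕀_{a↑} to the indecomposable projective 𝕀_{(⌊a⌋_Q)↑}: that is, for all x ∈ Q, colim(𝕀_{a↑} restricted to ⌈x↓⌉_Q) is isomorphic to k if ⌊a⌋_Q ≤ x and is 0 otherwise. -/

import Mathlib

open CategoryTheory Limits Classical in
/-- The interval module `𝕀_S : P ⥤ Vect_k` of a convex subset `S ⊆ P`. -/
noncomputable def intervalModule (k : Type) [Field k] {P : Type} [PartialOrder P]
    (S : Set P)
    (hconv : ∀ ⦃x y z : P⦄, x ∈ S → z ∈ S → x ≤ y → y ≤ z → y ∈ S) :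
    P ⥤ ModuleCat.{0} k where
  obj x := ModuleCat.of k (PLift (x ∈ S) → k)
  map {x y} h := ModuleCat.ofHom
    { toFun := fun f _hy => if hx : x ∈ S then f ⟨hx⟩ else 0
      map_add' := by
        intro f g
        funext hy
        by_cases hx : x ∈ S
        · simp only [dif_pos hx]; rfl
        · simp only [dif_neg hx]
          show (0 : k) = 0 + 0
          rw [add_zero]
      map_smul' := by
        intro c f
        funext hy
        by_cases hx : x ∈ S
        · simp only [dif_pos hx]; rfl
        · simp only [dif_neg hx]
          show (0 : k) = c • 0
          rw [smul_zero] }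
  map_id x := by
    apply ModuleCat.hom_ext
    apply LinearMap.ext
    intro f
    funext hx
    simp [dif_pos hx.down]
  map_comp {x y z} hxy hyz := by
    apply ModuleCat.hom_ext
    apply LinearMap.ext
    intro f
    funext hz
    by_cases hx : x ∈ S
    · have hy : y ∈ S := hconv hx hz.down (leOfHom hxy) (leOfHom hyz)
      simp [dif_pos hx, dif_pos hy]
    · by_cases hy : y ∈ S
      · simp [dif_neg hx, dif_pos hy]
      · simp [dif_neg hx, dif_neg hy]

open CategoryTheory Limits in
/-- For an interior system `Q` of a poset `P` with floor function `fl`, the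
contraction functor (the left Kan extension along `fl`, whose value at
`x ∈ Q` is the colimit over `⌈x↓⌉_Q = {b | fl b ≤ x}`) sends the
indecomposable projective `𝕀_{a↑}` to `𝕀_{(fl a)↑}`: for every `x ∈ Q`,
the colimit of `𝕀_{a↑}` restricted to `⌈x↓⌉_Q` is isomorphic to `k` if
`fl a ≤ x` and vanishes otherwise. -/
theorem stmt_16 (k : Type) [Field k] {P : Type} [PartialOrder P]
    (Q : Set P) (fl : P → P)
    (hmem : ∀ x : P, fl x ∈ Q) (hle : ∀ x : P, fl x ≤ x)
    (hmax : ∀ x : P, ∀ y ∈ Q, y ≤ x → y ≤ fl x)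
    (a : P) (x : P) (hx : x ∈ Q) :
    (fl a ≤ x →
      Nonempty ((colimit
        ((Monotone.functor
            (f := (Subtype.val : {b : P | fl b ≤ x} → P)) (fun _ _ h => h)) ⋙
          intervalModule k (Set.Ici a)
            (fun _ _ _ h1 _ h2 _ => le_trans h1 h2)) : ModuleCat k) ≃ₗ[k] k)) ∧
    (¬ fl a ≤ x →
      Subsingleton ((colimit
        ((Monotone.functor
            (f := (Subtype.val : {b : P | fl b ≤ x} → P)) (fun _ _ h => h)) ⋙
          intervalModule k (Set.Ici a)
            (fun _ _ _ h1 _ h2 _ => le_trans h1 h2)) : ModuleCat k))) := by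
  classical
  set F := ((Monotone.functor
            (f := (Subtype.val : {b : P | fl b ≤ x} → P)) (fun _ _ h => h)) ⋙
          intervalModule k (Set.Ici a)
            (fun _ _ _ h1 _ h2 _ => le_trans h1 h2)) with hF
  constructor
  · intro ha
    let ε : ∀ b : {b : P | fl b ≤ x}, F.obj b →ₗ[k] (ModuleCat.of k k) := fun b =>
      { toFun := fun f => if h : b.val ∈ Set.Ici a then f ⟨h⟩ else 0
        map_add' := by
          intro f g
          by_cases h : b.val ∈ Set.Ici a
          · simp only [dif_pos h]; rfl
          · simp only [dif_neg h]
            show (0:k) = 0 + 0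
            rw [add_zero]
        map_smul' := by
          intro c f
          by_cases h : b.val ∈ Set.Ici a
          · simp only [dif_pos h]; rfl
          · simp only [dif_neg h]
            show (0:k) = c • 0
            rw [smul_zero] }
    let cc : Cocone F :=
      { pt := ModuleCat.of k k
        ι :=
          { app := fun b => ModuleCat.ofHom (ε b)
            naturality := by
              intro b c h
              apply ModuleCat.hom_ext
              apply LinearMap.ext
              intro f
              show (ε c) ((F.map h) f) = (ε b) f
              show (if hc : c.val ∈ Set.Ici a then
                  (if hb : b.val ∈ Set.Ici a then f ⟨hb⟩ else 0) else 0) =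
                (if hb : b.val ∈ Set.Ici a then f ⟨hb⟩ else 0)
              by_cases hb : b.val ∈ Set.Ici a
              · have hc : c.val ∈ Set.Ici a := le_trans hb (leOfHom h)
                simp only [dif_pos hb, dif_pos hc]
              · by_cases hc : c.val ∈ Set.Ici a
                · simp only [dif_neg hb, dif_pos hc]
                · simp only [dif_neg hb, dif_neg hc] } }
    have haa : a ∈ Set.Ici a := le_refl a
    let aI : {b : P | fl b ≤ x} := ⟨a, ha⟩
    have hεa : ∀ c : k, (ε aI) (fun _ => c) = c := by
      intro c
      show (if h : (aI : {b : P | fl b ≤ x}).val ∈ Set.Ici a then c else 0) = c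
      exact dif_pos haa
    let isc : IsColimit cc :=
      { desc := fun s => ModuleCat.ofHom
          { toFun := fun c => s.ι.app aI ((fun _ => c : PLift ((aI : {b : P | fl b ≤ x}).val ∈ Set.Ici a) → k))
            map_add' := by
              intro c d
              show s.ι.app aI (fun _ => c + d) = s.ι.app aI (fun _ => c) + s.ι.app aI (fun _ => d)
              exact (ConcreteCategory.hom (s.ι.app aI)).map_add (fun _ => c) (fun _ => d)
            map_smul' := by
              intro c d
              show s.ι.app aI (fun _ => c • d) = c • s.ι.app aI (fun _ => d)
              exact (ConcreteCategory.hom (s.ι.app aI)).map_smul c (fun _ => d) }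
        fac := by
          intro s b
          apply ModuleCat.hom_ext
          apply LinearMap.ext
          intro f
          show s.ι.app aI (fun _ => (ε b) f) = s.ι.app b f
          by_cases hb : b.val ∈ Set.Ici a
          · have h2 : (ε b) f = f ⟨hb⟩ := dif_pos hb
            rw [h2]
            have hmor : aI ⟶ b := homOfLE hb
            have e1 : (F.map hmor) (fun _ => f ⟨hb⟩ : PLift ((aI : {b : P | fl b ≤ x}).val ∈ Set.Ici a) → k) = f := by
              funext hy
              show (if h' : (aI : {b : P | fl b ≤ x}).val ∈ Set.Ici a then f ⟨hb⟩ else 0) = f hy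
              rw [dif_pos haa]
            have h3 := congrArg (fun (φ : F.obj aI ⟶ s.pt) => φ (fun _ => f ⟨hb⟩))
              (s.ι.naturality hmor)
            calc s.ι.app aI (fun _ => f ⟨hb⟩)
                = s.ι.app b ((F.map hmor) (fun _ => f ⟨hb⟩)) := h3.symm
              _ = s.ι.app b f := congrArg (s.ι.app b) e1
          · have h2 : (ε b) f = 0 := dif_neg hb
            have hf : f = 0 := funext fun hy => absurd hy.down hb
            rw [h2, hf]
            show s.ι.app aI 0 = s.ι.app b 0
            rw [map_zero, map_zero]
        uniq := by
          intro s m hm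
          apply ModuleCat.hom_ext
          apply LinearMap.ext
          intro c
          have hm' := congrArg (fun (φ : F.obj aI ⟶ s.pt) => φ (fun _ => c)) (hm aI)
          calc m c = m ((ε aI) (fun _ => c)) := by rw [hεa c]
            _ = s.ι.app aI (fun _ => c) := hm'
            _ = _ := rfl }
    exact ⟨((colimit.isColimit F).coconePointUniqueUpToIso isc).toLinearEquiv⟩
  · intro ha
    have hzero : ∀ b : {b : P | fl b ≤ x}, colimit.ι F b = 0 := by
      intro b
      apply ModuleCat.hom_ext
      apply LinearMap.ext
      intro f
      have hb : ¬ a ≤ b.val := by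
        intro hab
        exact ha (le_trans (hmax b.val (fl a) (hmem a) (le_trans (hle a) hab)) b.property)
      have hf : f = 0 := funext fun hy => absurd hy.down hb
      rw [hf, map_zero]
      rfl
    have hid : 𝟙 (colimit F) = 0 := by
      apply colimit.hom_ext
      intro b
      rw [Category.comp_id, comp_zero, hzero b]
    have key : ∀ y : (colimit F : ModuleCat k), y = 0 := by
      intro y
      calc y = (𝟙 (colimit F)) y := rfl
        _ = (0 : colimit F ⟶ colimit F) y := by rw [hid]
        _ = 0 := rfl
    exact ⟨fun y z => (key y).trans (key z).symm⟩
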